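/- arXiv:1206.0553 — 2 statements merged into one kernel-verified Lean document; each statement's English description precedes it below -/
import Mathlib

section
/- The map Q_{m,r} : ℤ₂ → ℤ₂ is a bijection. -/
open scoped Classical

lemma two_dvd_iff_norm (a : ℤ_[2]) (k : ℕ) :
    (2 ^ k : ℤ_[2]) ∣ a ↔ ‖a‖ ≤ (2:ℝ) ^ (-(k:ℤ)) := by
  have := PadicInt.norm_le_pow_iff_mem_span_pow (p := 2) a k
  rw [Ideal.mem_span_singleton] at this
  rw [show ((2:ℕ):ℤ_[2])^k = (2:ℤ_[2])^k by norm_num, show (((2:ℕ)):ℝ) = (2:ℝ) by norm_num] at this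
  exact this.symm

lemma eq_zero_of_all_dvd (a : ℤ_[2]) (h : ∀ k : ℕ, (2 ^ k : ℤ_[2]) ∣ a) : a = 0 := by
  have h2 : ∀ k : ℕ, ‖a‖ ≤ (1/2:ℝ) ^ k := by
    intro k
    have := (two_dvd_iff_norm a k).mp (h k)
    rwa [show ((2:ℝ)) ^ (-(k:ℤ)) = (1/2:ℝ)^k by
      rw [zpow_neg, zpow_natCast]; simp [inv_pow]] at this
  have ht : Filter.Tendsto (fun k : ℕ => (1/2:ℝ)^k) Filter.atTop (nhds 0) :=
    tendsto_pow_atTop_nhds_zero_of_lt_one (by norm_num) (by norm_num)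
  have : ‖a‖ ≤ 0 := ge_of_tendsto' ht h2
  simpa using le_antisymm this (norm_nonneg a)

lemma norm_le_of_dvd_imp {a b : ℤ_[2]} (h : ∀ k : ℕ, (2^k : ℤ_[2]) ∣ a → (2^k : ℤ_[2]) ∣ b) :
    ‖b‖ ≤ ‖a‖ := by
  rcases eq_or_ne a 0 with rfl | ha
  · have : b = 0 := eq_zero_of_all_dvd b (fun k => h k (dvd_zero _))
    simp [this]
  · have hv := PadicInt.norm_eq_zpow_neg_valuation ha
    set v : ℕ := a.valuation with hvdef
    have hvv : (v : ℤ) = a.valuation := rfl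
    have hna : ‖a‖ = (2:ℝ) ^ (-(v:ℤ)) := by rw [hv]; norm_num
    have hda : (2^v : ℤ_[2]) ∣ a := (two_dvd_iff_norm a v).mpr (le_of_eq hna)
    have := (two_dvd_iff_norm b v).mp (h v hda)
    rw [hna]; exact this

lemma int_two_dvd_cast {n : ℤ} (hn : Odd n) : ¬ (2:ℤ_[2]) ∣ (n : ℤ_[2]) := by
  intro h
  have h1 : ‖(n : ℤ_[2])‖ < 1 := by
    have := (PadicInt.norm_lt_one_iff_dvd (p := 2) (n : ℤ_[2]))
    rw [show ((2:ℕ):ℤ_[2]) = (2:ℤ_[2]) by norm_num] at this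
    exact this.mpr h
  have h2 : ((2:ℕ):ℤ) ∣ n := (PadicInt.norm_int_lt_one_iff_dvd (p := 2) n).mp h1
  rw [← Int.not_even_iff_odd, even_iff_two_dvd] at hn
  exact hn (by exact_mod_cast h2)

/-- `Q_{m,r} : ℤ₂ → ℤ₂` is a bijection. -/
theorem stmt2 (m r : ℤ) (hm : Odd m) (hr : Odd r)
    (T Q : ℤ_[2] → ℤ_[2])
    (hT : ∀ x, 2 * T x = if (2 : ℤ_[2]) ∣ x then x else (m : ℤ_[2]) * x + (r : ℤ_[2]))
    (hQ : ∀ x (k : ℕ), (2 ^ k : ℤ_[2]) ∣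
      (Q x - ∑ i ∈ Finset.range k, (if (2 : ℤ_[2]) ∣ T^[i] x then 0 else 1) * 2 ^ i)) :
    Function.Bijective Q := by
  set e : ℤ_[2] → ℤ_[2] := fun x => if (2 : ℤ_[2]) ∣ x then 0 else 1 with he
  have two_ne : (2 : ℤ_[2]) ≠ 0 := by norm_num
  have hm2 : ¬ (2:ℤ_[2]) ∣ (m : ℤ_[2]) := int_two_dvd_cast hm
  have hr2 : ¬ (2:ℤ_[2]) ∣ (r : ℤ_[2]) := int_two_dvd_cast hr
  have hone : ¬ (2:ℤ_[2]) ∣ (1 : ℤ_[2]) := by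
    intro h
    exact int_two_dvd_cast (n := 1) (by norm_num) (by exact_mod_cast h)
  have hmu : IsUnit (m : ℤ_[2]) := by
    rw [PadicInt.isUnit_iff]
    refine le_antisymm (PadicInt.norm_le_one _) ?_
    by_contra hlt
    push_neg at hlt
    refine hm2 ?_
    have := (PadicInt.norm_lt_one_iff_dvd (p := 2) (m:ℤ_[2])).mp hlt
    rwa [show ((2:ℕ):ℤ_[2]) = (2:ℤ_[2]) by norm_num] at this
  -- partial sums
  have hsum : ∀ x (k : ℕ),
      ∑ i ∈ Finset.range (k+1), e (T^[i] x) * 2 ^ i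
        = e x + 2 * ∑ i ∈ Finset.range k, e (T^[i] (T x)) * 2 ^ i := by
    intro x k
    rw [Finset.sum_range_succ' (fun i => e (T^[i] x) * 2 ^ i) k]
    simp only [Function.iterate_succ_apply, Function.iterate_zero_apply, pow_zero, mul_one]
    rw [add_comm, Finset.mul_sum]
    congr 1
    exact Finset.sum_congr rfl fun i _ => by ring
  -- key identity
  have hQid : ∀ x, Q x = e x + 2 * Q (T x) := by
    intro x
    have key : ∀ k : ℕ, (2^k : ℤ_[2]) ∣ (Q x - (e x + 2 * Q (T x))) := by
      intro k
      have h1 := hQ x (k+1)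
      have h2 := hQ (T x) k
      have h2' : (2^(k+1) : ℤ_[2]) ∣
          2 * (Q (T x) - ∑ i ∈ Finset.range k, e (T^[i] (T x)) * 2 ^ i) := by
        rw [pow_succ, mul_comm ((2:ℤ_[2])^k) 2]
        exact mul_dvd_mul_left 2 h2
      have heq : Q x - (e x + 2 * Q (T x))
          = (Q x - ∑ i ∈ Finset.range (k+1), e (T^[i] x) * 2 ^ i)
            - 2 * (Q (T x) - ∑ i ∈ Finset.range k, e (T^[i] (T x)) * 2 ^ i) := by
        rw [hsum x k]; ring
      have : (2^(k+1) : ℤ_[2]) ∣ (Q x - (e x + 2 * Q (T x))) := by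
        rw [heq]; exact dvd_sub h1 h2'
      exact dvd_trans (pow_dvd_pow 2 (Nat.le_succ k)) this
    have := eq_zero_of_all_dvd _ key
    exact sub_eq_zero.mp this
  -- from e x + 2a = e y + 2b deduce e x = e y and a = b
  have hcancel : ∀ (x y : ℤ_[2]) {a b : ℤ_[2]}, e x + 2 * a = e y + 2 * b →
      e x = e y ∧ a = b := by
    intro x y a b h
    have hee : e x = e y := by
      by_cases h1 : (2:ℤ_[2]) ∣ x <;> by_cases h2 : (2:ℤ_[2]) ∣ y <;>
        simp only [he, if_pos, if_neg, h1, h2, if_true, if_false]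
      · exfalso
        apply hone
        have hx0 : e x = 0 := by simp [he, h1]
        have hy1 : e y = 1 := by simp [he, h2]
        rw [hx0, hy1] at h
        exact ⟨a - b, by linear_combination -h⟩
      · exfalso
        apply hone
        have hx0 : e x = 1 := by simp [he, h1]
        have hy1 : e y = 0 := by simp [he, h2]
        rw [hx0, hy1] at h
        exact ⟨b - a, by linear_combination h⟩
    refine ⟨hee, ?_⟩
    rw [hee] at h
    have : 2 * a = 2 * b := by linear_combination h
    exact mul_left_cancel₀ two_ne this
  -- T on even / odd
  have hTe : ∀ x, (2:ℤ_[2]) ∣ x → 2 * T x = x := by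
    intro x hx; rw [hT, if_pos hx]
  have hTo : ∀ x, ¬ (2:ℤ_[2]) ∣ x → 2 * T x = (m:ℤ_[2]) * x + (r:ℤ_[2]) := by
    intro x hx; rw [hT, if_neg hx]
  -- parity transfer
  have hpar : ∀ x y : ℤ_[2], ((2:ℤ_[2]) ∣ x ↔ (2:ℤ_[2]) ∣ y) →
      ∃ c : ℤ_[2], IsUnit c ∧ 2 * (T x - T y) = c * (x - y) := by
    intro x y hp
    by_cases hx : (2:ℤ_[2]) ∣ x
    · have hy := hp.mp hx
      exact ⟨1, isUnit_one, by rw [mul_sub, hTe x hx, hTe y hy]; ring⟩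
    · have hy := fun h => hx (hp.mpr h)
      exact ⟨(m:ℤ_[2]), hmu, by rw [mul_sub, hTo x hx, hTo y hy]; ring⟩
  -- injectivity mod 2^k
  have hinj : ∀ (k : ℕ) (x y : ℤ_[2]), Q x = Q y → (2^k : ℤ_[2]) ∣ (x - y) := by
    intro k
    induction k with
    | zero => intro x y _; simpa using one_dvd _
    | succ k ih =>
      intro x y h
      have h' : e x + 2 * Q (T x) = e y + 2 * Q (T y) := by
        rw [← hQid, ← hQid, h]
      obtain ⟨hee, hQT⟩ := hcancel x y h'
      have hpx : ((2:ℤ_[2]) ∣ x ↔ (2:ℤ_[2]) ∣ y) := by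
        by_cases h1 : (2:ℤ_[2]) ∣ x <;> by_cases h2 : (2:ℤ_[2]) ∣ y
        · exact iff_of_true h1 h2
        · exact absurd (show (0:ℤ_[2]) = 1 by simpa [he, h1, h2] using hee) zero_ne_one
        · exact absurd (show (1:ℤ_[2]) = 0 by simpa [he, h1, h2] using hee) one_ne_zero
        · exact iff_of_false h1 h2
      obtain ⟨c, hc, hceq⟩ := hpar x y hpx
      have hk : (2^k : ℤ_[2]) ∣ (T x - T y) := ih (T x) (T y) hQT
      have : (2^(k+1) : ℤ_[2]) ∣ c * (x - y) := by
        rw [← hceq, pow_succ, mul_comm ((2:ℤ_[2])^k) 2]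
        exact mul_dvd_mul_left 2 hk
      exact (hc.dvd_mul_left).mp this
  have hQinj : Function.Injective Q := by
    intro x y h
    have : x - y = 0 := eq_zero_of_all_dvd _ (fun k => hinj k x y h)
    linear_combination this
  -- Q contracts 2-adic congruences
  have hC : ∀ (k : ℕ) (x y : ℤ_[2]), (2^k : ℤ_[2]) ∣ (x - y) → (2^k : ℤ_[2]) ∣ (Q x - Q y) := by
    intro k
    induction k with
    | zero => intro x y _; simpa using one_dvd _
    | succ k ih =>
      intro x y h
      have h2 : (2:ℤ_[2]) ∣ (x - y) := dvd_trans (by exact ⟨2^k, by ring⟩) h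
      have hpx : ((2:ℤ_[2]) ∣ x ↔ (2:ℤ_[2]) ∣ y) := by
        constructor
        · intro hx; have := dvd_sub hx h2; simpa using this
        · intro hy; have := dvd_add hy h2; simpa using this
      obtain ⟨c, hc, hceq⟩ := hpar x y hpx
      have hT2 : (2^k : ℤ_[2]) ∣ (T x - T y) := by
        have : (2^(k+1) : ℤ_[2]) ∣ c * (x - y) := Dvd.dvd.mul_left h c
        rw [← hceq, pow_succ, mul_comm ((2:ℤ_[2])^k) 2] at this
        exact (mul_dvd_mul_iff_left two_ne).mp this
      have hQk := ih (T x) (T y) hT2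
      have hee : e x = e y := by
        by_cases h1 : (2:ℤ_[2]) ∣ x
        · simp [he, h1, hpx.mp h1]
        · have h2' : ¬ (2:ℤ_[2]) ∣ y := fun h' => h1 (hpx.mpr h')
          simp [he, h1, h2']
      have : Q x - Q y = 2 * (Q (T x) - Q (T y)) := by
        rw [hQid x, hQid y, hee]; ring
      rw [this, pow_succ, mul_comm ((2:ℤ_[2])^k) 2]
      exact mul_dvd_mul_left 2 hQk
  -- Q is 1-Lipschitz hence continuous
  have hQcont : Continuous Q := by
    refine LipschitzWith.continuous (K := 1) ?_
    refine LipschitzWith.of_dist_le_mul ?_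
    intro x y
    rw [NNReal.coe_one, one_mul, dist_eq_norm, dist_eq_norm]
    exact norm_le_of_dvd_imp (fun k hk => hC k x y hk)
  -- preimages mod 2^k
  have hpre : ∀ (k : ℕ) (y : ℤ_[2]), ∃ x, (2^k : ℤ_[2]) ∣ (Q x - y) := by
    intro k
    induction k with
    | zero => intro y; exact ⟨y, by simpa using one_dvd _⟩
    | succ k ih =>
      intro y
      by_cases hy : (2:ℤ_[2]) ∣ y
      · obtain ⟨y', hy'⟩ := hy
        obtain ⟨x', hx'⟩ := ih y'
        refine ⟨2 * x', ?_⟩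
        have hdvd : (2:ℤ_[2]) ∣ 2 * x' := ⟨x', rfl⟩
        have hTx : T (2 * x') = x' := by
          have := hTe (2 * x') hdvd
          exact (mul_left_cancel₀ two_ne this)
        have hQx : Q (2 * x') = 2 * Q x' := by
          rw [hQid (2 * x')]
          simp [he, hdvd, hTx]
        rw [hQx, hy']
        have : 2 * Q x' - 2 * y' = 2 * (Q x' - y') := by ring
        rw [this, pow_succ, mul_comm ((2:ℤ_[2])^k) 2]
        exact mul_dvd_mul_left 2 hx'
      · -- y is odd: 2 ∣ y - 1
        have hy1 : (2:ℤ_[2]) ∣ y - 1 := by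
          have hlt := PadicInt.appr_lt y 1
          have hspec := PadicInt.appr_spec 1 y
          rw [Ideal.mem_span_singleton, pow_one] at hspec
          rw [show ((2:ℕ):ℤ_[2]) = (2:ℤ_[2]) by norm_num] at hspec
          norm_num at hlt
          interval_cases h : (y.appr 1)
          · exfalso; apply hy; simpa using hspec
          · simpa using hspec
        obtain ⟨y', hy'⟩ := hy1
        obtain ⟨x', hx'⟩ := ih y'
        obtain ⟨u, hu⟩ := hmu
        refine ⟨(↑u⁻¹ : ℤ_[2]) * (2 * x' - r), ?_⟩
        set x : ℤ_[2] := (↑u⁻¹ : ℤ_[2]) * (2 * x' - r) with hxdef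
        have hmx : (m:ℤ_[2]) * x = 2 * x' - r := by
          rw [hxdef, ← hu, ← mul_assoc, u.mul_inv, one_mul]
        have hxodd : ¬ (2:ℤ_[2]) ∣ x := by
          intro hdx
          apply hr2
          have h1 : (2:ℤ_[2]) ∣ (m:ℤ_[2]) * x := Dvd.dvd.mul_left hdx _
          rw [hmx] at h1
          have : (r:ℤ_[2]) = 2 * x' - (2 * x' - (r:ℤ_[2])) := by ring
          rw [this]
          exact dvd_sub ⟨x', rfl⟩ h1
        have hTx : T x = x' := by
          have h1 := hTo x hxodd
          rw [hmx] at h1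
          have : 2 * T x = 2 * x' := by rw [h1]; ring
          exact mul_left_cancel₀ two_ne this
        have hQx : Q x = 1 + 2 * Q x' := by
          rw [hQid x, hTx]
          simp [he, hxodd]
        rw [hQx, show y = 1 + 2 * y' by rw [← hy']; ring]
        have : 1 + 2 * Q x' - (1 + 2 * y') = 2 * (Q x' - y') := by ring
        rw [this, pow_succ, mul_comm ((2:ℤ_[2])^k) 2]
        exact mul_dvd_mul_left 2 hx'
  -- surjectivity
  have hQsurj : Function.Surjective Q := by
    intro y
    have hclosed : IsClosed (Set.range Q) := (isCompact_range hQcont).isClosed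
    have hmem : y ∈ closure (Set.range Q) := by
      rw [Metric.mem_closure_iff]
      intro ε hε
      obtain ⟨k, hk⟩ := exists_pow_lt_of_lt_one hε (by norm_num : (1/2:ℝ) < 1)
      obtain ⟨x, hx⟩ := hpre k y
      refine ⟨Q x, Set.mem_range_self x, ?_⟩
      have h1 : ‖Q x - y‖ ≤ (2:ℝ) ^ (-(k:ℤ)) := (two_dvd_iff_norm _ k).mp hx
      have h2 : ((2:ℝ)) ^ (-(k:ℤ)) = (1/2:ℝ)^k := by
        rw [zpow_neg, zpow_natCast]; simp [inv_pow]
      calc dist y (Q x) = ‖Q x - y‖ := by rw [dist_eq_norm, ← norm_neg]; ring_nf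
        _ ≤ (1/2:ℝ)^k := by rw [← h2]; exact h1
        _ < ε := hk
    rw [hclosed.closure_eq] at hmem
    exact hmem
  exact ⟨hQinj, hQsurj⟩
end

section
/- For all x ∈ ℤ₂, Φ_{m,r}(x) = r · Φ_{m,1}(x). -/
open scoped Classical

lemma stmt8_zero (z : ℤ_[2]) (h : ∀ k : ℕ, (2 ^ k : ℤ_[2]) ∣ z) : z = 0 := by
  by_contra hz
  have hz' : 0 < ‖z‖ := norm_pos_iff.mpr hz
  obtain ⟨k, hk⟩ := exists_pow_lt_of_lt_one hz' (by norm_num : (1/2 : ℝ) < 1)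
  obtain ⟨c, hc⟩ := h k
  have : ‖z‖ ≤ (1/2 : ℝ) ^ k := by
    rw [hc, norm_mul, norm_pow]
    calc ‖(2:ℤ_[2])‖ ^ k * ‖c‖ ≤ ‖(2:ℤ_[2])‖ ^ k * 1 := by
          gcongr; exact c.norm_le_one
      _ = (1/2:ℝ) ^ k := by
          rw [mul_one]
          congr 1
          simpa using @PadicInt.norm_p 2 _
  linarith

/-- `Φ_{m,r}(x) = r · Φ_{m,1}(x)` for all `x ∈ ℤ₂`. -/
theorem stmt8 (m r : ℤ) (hm : Odd m) (hr : Odd r)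
    (T T1 Q Q1 Φ Φ1 : ℤ_[2] → ℤ_[2])
    (hT : ∀ x, 2 * T x = if (2 : ℤ_[2]) ∣ x then x else (m : ℤ_[2]) * x + (r : ℤ_[2]))
    (hT1 : ∀ x, 2 * T1 x = if (2 : ℤ_[2]) ∣ x then x else (m : ℤ_[2]) * x + 1)
    (hQ : ∀ x (k : ℕ), (2 ^ k : ℤ_[2]) ∣
      (Q x - ∑ i ∈ Finset.range k, (if (2 : ℤ_[2]) ∣ T^[i] x then 0 else 1) * 2 ^ i))
    (hQ1 : ∀ x (k : ℕ), (2 ^ k : ℤ_[2]) ∣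
      (Q1 x - ∑ i ∈ Finset.range k, (if (2 : ℤ_[2]) ∣ T1^[i] x then 0 else 1) * 2 ^ i))
    (hΦl : Function.LeftInverse Φ Q) (hΦr : Function.RightInverse Φ Q)
    (hΦ1l : Function.LeftInverse Φ1 Q1) (hΦ1r : Function.RightInverse Φ1 Q1) :
    ∀ x, Φ x = (r : ℤ_[2]) * Φ1 x := by
  have hp : Prime (2 : ℤ_[2]) := by simpa using @PadicInt.prime_p 2 _
  have h2r : ¬ (2 : ℤ_[2]) ∣ (r : ℤ_[2]) := by
    obtain ⟨k, hk⟩ := hr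
    intro ⟨c, hc⟩
    apply hp.not_unit
    apply isUnit_of_dvd_one
    refine ⟨c - (k : ℤ_[2]), ?_⟩
    have : ((r : ℤ) : ℤ_[2]) = 2 * k + 1 := by push_cast [hk]; ring
    rw [this] at hc
    linear_combination hc
  have hdvd : ∀ y : ℤ_[2], ((2 : ℤ_[2]) ∣ (r : ℤ_[2]) * y ↔ (2 : ℤ_[2]) ∣ y) := by
    intro y
    constructor
    · intro h
      rcases hp.dvd_mul.mp h with h | h
      · exact absurd h h2r
      · exact h
    · exact fun h => h.mul_left _
  have h2ne : (2 : ℤ_[2]) ≠ 0 := hp.ne_zero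
  have hTkey : ∀ z : ℤ_[2], T ((r : ℤ_[2]) * z) = (r : ℤ_[2]) * T1 z := by
    intro z
    apply mul_left_cancel₀ h2ne
    rw [hT, show (2:ℤ_[2]) * ((r:ℤ_[2]) * T1 z) = (r:ℤ_[2]) * (2 * T1 z) from by ring, hT1, hdvd]
    split
    · ring
    · push_cast; ring
  have hit : ∀ (i : ℕ) (y : ℤ_[2]), T^[i] ((r : ℤ_[2]) * y) = (r : ℤ_[2]) * T1^[i] y := by
    intro i
    induction i with
    | zero => simp
    | succ n ih =>
      intro y
      rw [Function.iterate_succ_apply', Function.iterate_succ_apply', ih, hTkey]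
  have hQeq : ∀ y : ℤ_[2], Q ((r : ℤ_[2]) * y) = Q1 y := by
    intro y
    have : Q ((r : ℤ_[2]) * y) - Q1 y = 0 := by
      apply stmt8_zero
      intro k
      have h1 := hQ ((r : ℤ_[2]) * y) k
      have h2 := hQ1 y k
      have hsum : ∀ i, (if (2 : ℤ_[2]) ∣ T^[i] ((r : ℤ_[2]) * y) then (0:ℤ_[2]) else 1)
          = (if (2 : ℤ_[2]) ∣ T1^[i] y then 0 else 1) := by
        intro i
        rw [hit i y, hdvd]
      simp only [hsum] at h1
      have := dvd_sub h1 h2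
      simpa using this
    exact sub_eq_zero.mp this
  intro x
  have := hQeq (Φ1 x)
  rw [hΦ1r x] at this
  calc Φ x = Φ (Q ((r : ℤ_[2]) * Φ1 x)) := by rw [this]
    _ = (r : ℤ_[2]) * Φ1 x := hΦl _
end
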